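/- arXiv:astro-ph/9906051 — 7 statements merged into one kernel-verified Lean document; each statement's English description precedes it below -/
import Mathlib

section
/- For the constant surface brightness disk f(r) = 1/π for r ≤ 1 and f(r) = 0 for r > 1, the width p of the least-squares gaussian fit satisfies the equation p = ln(2p + 1), which has a unique positive solution p ≈ 1.2564312. -/
/-! The normal equation is explicit because its integrand has the antiderivative
`(2 p r² + 1) e^{-p r²} / (2 p)`: over the disk it reads `(2p + 1) e^{-p} = 1`,
i.e. `e^p = 2p + 1`. The positive roots of this are the points where the secant slope
`(e^p - 1) / p` of `exp` from `0` equals `2`. By strict convexity of `exp` that slope is strictly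
increasing on `(0, ∞)`, which gives uniqueness, and evaluating it on both sides of `1.2564312`
brackets the root. -/

open MeasureTheory Set Real

lemma eq_log_iff_exp_eq {x y : ℝ} (hy : 0 < y) : x = log y ↔ exp x = y :=
  ⟨fun h => h ▸ exp_log hy, fun h => h ▸ (log_exp x).symm⟩

lemma setIntegral_Ioi_disk_profile_mul {f : ℝ → ℝ}
    (hf : ∀ r : ℝ, 0 ≤ r → f r = if r ≤ 1 then 1 / π else 0) (g : ℝ → ℝ) :
    ∫ r in Ioi 0, f r * g r = π⁻¹ * ∫ r in (0)..1, g r := by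
  have hfg : EqOn (fun r => f r * g r) ((Ioc 0 1).indicator fun r => π⁻¹ * g r) (Ioi 0) := by
    intro r (hr : 0 < r)
    by_cases h1 : r ≤ 1
    · simp [hf r hr.le, h1, hr]
    · simp [hf r hr.le, h1]
  rw [setIntegral_congr_fun measurableSet_Ioi hfg, setIntegral_indicator measurableSet_Ioc,
    inter_eq_right.mpr Ioc_subset_Ioi_self, intervalIntegral.integral_of_le zero_le_one,
    integral_const_mul]

lemma hasDerivAt_gaussian_fit_antideriv (p r : ℝ) :
    HasDerivAt (fun r => (2 * p * r ^ 2 + 1) * exp (-p * r ^ 2))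
      (2 * p * ((1 - 2 * p * r ^ 2) * r * exp (-p * r ^ 2))) r := by
  have hpoly : HasDerivAt (fun r => 2 * p * r ^ 2 + 1) (2 * p * (2 * r)) r := by
    simpa using ((hasDerivAt_pow 2 r).const_mul (2 * p)).add_const 1
  have hexp : HasDerivAt (fun r => exp (-p * r ^ 2)) (exp (-p * r ^ 2) * (-p * (2 * r))) r := by
    simpa using ((hasDerivAt_pow 2 r).const_mul (-p)).exp
  exact (hpoly.mul hexp).congr_deriv (by ring)

lemma two_mul_integral_gaussian_fit_integrand (p a : ℝ) :
    2 * p * ∫ r in (0)..a, (1 - 2 * p * r ^ 2) * r * exp (-p * r ^ 2) =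
      (2 * p * a ^ 2 + 1) * exp (-p * a ^ 2) - 1 := by
  rw [← intervalIntegral.integral_const_mul,
    intervalIntegral.integral_eq_sub_of_hasDerivAt
      (fun r _ => hasDerivAt_gaussian_fit_antideriv p r)
      ((by fun_prop : Continuous _).intervalIntegrable _ _)]
  simp

lemma mul_exp_neg_eq_one_iff {p c : ℝ} : c * exp (-p) = 1 ↔ exp p = c := by
  rw [exp_neg, mul_inv_eq_one₀ (exp_pos p).ne', eq_comm]

noncomputable def expSecantSlope (x : ℝ) : ℝ := (exp x - 1) / x

lemma strictMonoOn_expSecantSlope : StrictMonoOn expSecantSlope (Ioi 0) := by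
  intro x (hx : 0 < x) y (hy : 0 < y) hxy
  simpa [expSecantSlope] using
    strictConvexOn_exp.secant_strict_mono (mem_univ 0) (mem_univ x) (mem_univ y) hx.ne' hy.ne' hxy

lemma expSecantSlope_lt_iff {x c : ℝ} (hx : 0 < x) :
    expSecantSlope x < c ↔ exp x < c * x + 1 := by
  rw [expSecantSlope, div_lt_iff₀ hx, sub_lt_iff_lt_add]

lemma lt_expSecantSlope_iff {x c : ℝ} (hx : 0 < x) :
    c < expSecantSlope x ↔ c * x + 1 < exp x := by
  rw [expSecantSlope, lt_div_iff₀ hx, lt_sub_iff_add_lt]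

lemma expSecantSlope_eq_iff {x c : ℝ} (hx : 0 < x) :
    expSecantSlope x = c ↔ exp x = c * x + 1 := by
  rw [expSecantSlope, div_eq_iff hx.ne', sub_eq_iff_eq_add]

lemma continuousOn_expSecantSlope : ContinuousOn expSecantSlope (Ioi 0) :=
  (continuous_exp.sub continuous_const).continuousOn.div continuousOn_id fun _ hx => ne_of_gt hx

lemma eq_log_two_mul_add_one_iff {p : ℝ} (hp : 0 < p) :
    p = log (2 * p + 1) ↔ expSecantSlope p = 2 := by
  rw [eq_log_iff_exp_eq (by linarith), expSecantSlope_eq_iff hp]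

-- The Taylor bounds for `exp` need an argument in `[0, 1]`, so we square bounds at half the point.
lemma expSecantSlope_1_2564302_lt_two : expSecantSlope 1.2564302 < 2 := by
  rw [expSecantSlope_lt_iff (by norm_num),
    show (1.2564302 : ℝ) = (2 : ℕ) * 0.6282151 by norm_num, exp_nat_mul]
  have h := Real.exp_bound' (x := 0.6282151) (by norm_num) (by norm_num) (n := 9) (by norm_num)
  refine (pow_le_pow_left₀ (exp_pos _).le h 2).trans_lt ?_
  norm_num [Finset.sum_range_succ, Nat.factorial]

lemma two_lt_expSecantSlope_1_2564322 : 2 < expSecantSlope 1.2564322 := by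
  rw [lt_expSecantSlope_iff (by norm_num),
    show (1.2564322 : ℝ) = (2 : ℕ) * 0.6282161 by norm_num, exp_nat_mul]
  have h := Real.sum_le_exp_of_nonneg (x := 0.6282161) (by norm_num) 9
  refine lt_of_lt_of_le ?_ (pow_le_pow_left₀ (by positivity) h 2)
  norm_num [Finset.sum_range_succ, Nat.factorial]

theorem disk_gaussian_fit_width
    (f : ℝ → ℝ)
    (hf : ∀ r : ℝ, 0 ≤ r → f r = if r ≤ 1 then 1 / π else 0) :
    (∀ p : ℝ, 0 < p →
      ((∫ r in Ioi (0:ℝ), f r * (1 - 2 * p * r ^ 2) * r * Real.exp (-p * r ^ 2)) = 0 ↔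
        p = Real.log (2 * p + 1))) ∧
    (∃! p : ℝ, 0 < p ∧ p = Real.log (2 * p + 1)) ∧
    (∀ p : ℝ, 0 < p → p = Real.log (2 * p + 1) → |p - 1.2564312| < 1e-6) := by
  refine ⟨fun p hp => ?_, ?_, fun p hp hroot => ?_⟩
  · have hfit := setIntegral_Ioi_disk_profile_mul hf
      fun r => (1 - 2 * p * r ^ 2) * r * exp (-p * r ^ 2)
    simp only [← mul_assoc] at hfit
    have hmoment := two_mul_integral_gaussian_fit_integrand p 1
    simp only [one_pow, mul_one] at hmoment
    calc _ ↔ 2 * p * ∫ r in (0)..1, (1 - 2 * p * r ^ 2) * r * exp (-p * r ^ 2) = 0 := by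
          rw [hfit, mul_eq_zero, mul_eq_zero, or_iff_right (inv_ne_zero pi_ne_zero),
            or_iff_right (by positivity)]
      _ ↔ (2 * p + 1) * exp (-p) = 1 := by rw [hmoment, sub_eq_zero]
      _ ↔ exp p = 2 * p + 1 := mul_exp_neg_eq_one_iff
      _ ↔ p = log (2 * p + 1) := (eq_log_iff_exp_eq (by linarith)).symm
  · obtain ⟨c, ⟨hc_lo, -⟩, hc⟩ := intermediate_value_Ioo (by norm_num)
      (continuousOn_expSecantSlope.mono fun x hx => lt_of_lt_of_le (by norm_num) hx.1)
      ⟨expSecantSlope_1_2564302_lt_two, two_lt_expSecantSlope_1_2564322⟩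
    have hc_pos : 0 < c := lt_trans (by norm_num) hc_lo
    refine ⟨c, ⟨hc_pos, (eq_log_two_mul_add_one_iff hc_pos).2 hc⟩, fun q ⟨hq, hq_root⟩ =>
      strictMonoOn_expSecantSlope.injOn hq hc_pos
        (((eq_log_two_mul_add_one_iff hq).1 hq_root).trans hc.symm)⟩
  · have hslope := (eq_log_two_mul_add_one_iff hp).1 hroot
    have hlo := (strictMonoOn_expSecantSlope.lt_iff_lt (by norm_num : (0:ℝ) < 1.2564302) hp).1
      (hslope ▸ expSecantSlope_1_2564302_lt_two)
    have hhi := (strictMonoOn_expSecantSlope.lt_iff_lt hp (by norm_num : (0:ℝ) < 1.2564322)).1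
      (hslope ▸ two_lt_expSecantSlope_1_2564322)
    rw [abs_lt]
    constructor <;> linarith
end

section
/- Let f : [0,∞) → ℝ be nonnegative, bounded, and compactly supported, and let c_{2n} = 2π ∫₀^∞ f(r) r^{2n+1} dr and c_{2n}(p) = 2π ∫₀^∞ f(r) r^{2n+1} e^{−p r²} dr for p ≥ 0. Then the convolution of f (viewed as a circularly symmetric function on ℝ²) with the normalized gaussian kernel (p/π) e^{−p|x|²} equals f_c(r) = (p/π) e^{−p r²} Σ_{n=0}^∞ [c_{2n}(p) p^{2n} / (n!)²] r^{2n}, where the series converges absolutely for all r ≥ 0. -/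
open MeasureTheory Set Real
open scoped Nat

/-!
Map the plane isometrically onto `ℂ` and rotate so that `x` becomes the nonnegative real
`s = ‖x‖`. In polar coordinates the law of cosines
`|s - r e^{iθ}|² = s² + r² - 2 s r cos θ` splits the kernel as
`e^{-p s²} e^{-p r²} e^{2 p s r cos θ}`. Expanding the last factor in its exponential series and
integrating term by term (legitimate since the profile is bounded with compact support),
`∫_{-π}^{π} cos^k θ dθ` vanishes for odd `k` and equals
`2π (2n)! / (4ⁿ (n!)²)` for `k = 2n`, which turns the even terms into
`c_{2n}(p) p^{2n} s^{2n} / (n!)²`.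
-/

theorem integral_cos_pow_odd (n : ℕ) : ∫ θ in (-π)..π, cos θ ^ (2 * n + 1) = 0 := by
  induction n with
  | zero => simp
  | succ n ih =>
    rw [show 2 * (n + 1) + 1 = 2 * n + 1 + 2 by ring, integral_cos_pow, ih]
    simp

theorem integral_cos_pow_even (n : ℕ) :
    ∫ θ in (-π)..π, cos θ ^ (2 * n) = 2 * π * (2 * n)! / (4 ^ n * (n ! : ℝ) ^ 2) := by
  induction n with
  | zero => simp; ring
  | succ n ih =>
    rw [show 2 * (n + 1) = 2 * n + 2 by ring, integral_cos_pow, ih]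
    simp only [sin_pi, sin_neg, mul_zero, neg_zero, sub_zero, zero_div, zero_add]
    rw [Nat.factorial_succ, Nat.factorial_succ, Nat.factorial_succ]
    push_cast
    field_simp
    ring

theorem hasSum_setIntegral_mul_exp_mul_cos_pow {u : ℝ → ℝ} (hu : Measurable u) {R M : ℝ}
    (hM : ∀ r ∈ Ioc 0 R, |u r| ≤ M) (a : ℝ) :
    HasSum (fun k : ℕ => a ^ k / k ! * (∫ r in Ioc 0 R, u r * r ^ k) *
        ∫ θ in (-π)..π, cos θ ^ k)
      (∫ q in Ioc 0 R ×ˢ Ioo (-π) π, u q.1 * exp (a * q.1 * cos q.2)) := by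
  set D := Ioc 0 R ×ˢ Ioo (-π) π
  set term : ℕ → ℝ × ℝ → ℝ := fun k q => a ^ k / k ! * (u q.1 * q.1 ^ k) * cos q.2 ^ k
  have hD : volume D < ⊤ := by
    rw [Measure.volume_eq_prod, Measure.prod_prod]
    exact ENNReal.mul_lt_top measure_Ioc_lt_top measure_Ioo_lt_top
  have h_le : ∀ k, ∀ q ∈ D, ‖term k q‖ ≤ M * (|a| * R) ^ k / k ! := by
    rintro k ⟨r, θ⟩ ⟨hr, -⟩
    have hM0 : 0 ≤ M := (abs_nonneg _).trans (hM r hr)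
    have hcos : |cos θ| ^ k ≤ 1 := pow_le_one₀ (abs_nonneg _) (abs_cos_le_one θ)
    have hrk : |r| ^ k ≤ R ^ k := by
      rw [abs_of_pos hr.1]
      exact pow_le_pow_left₀ hr.1.le hr.2 k
    calc ‖term k (r, θ)‖ = |a| ^ k / k ! * (|u r| * |r| ^ k) * |cos θ| ^ k := by simp [term]
      _ ≤ |a| ^ k / k ! * (M * R ^ k) * 1 := by
          gcongr
          · exact mul_nonneg (by positivity) (mul_nonneg hM0 (hrk.trans' (by positivity)))
          · exact hM r hr
      _ = M * (|a| * R) ^ k / k ! := by ring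
  have h_int : ∀ k, IntegrableOn (term k) D :=
    fun k => Measure.integrableOn_of_bounded hD.ne (by fun_prop)
      ((ae_restrict_iff' (measurableSet_Ioc.prod measurableSet_Ioo)).2 (.of_forall (h_le k)))
  have h_sum : Summable fun k => ∫ q in D, ‖term k q‖ := by
    refine .of_nonneg_of_le (fun k => integral_nonneg fun q => norm_nonneg _)
      (fun k => ?_) (((summable_pow_div_factorial (|a| * R)).mul_left M).mul_right
        (volume.real D))
    refine (le_norm_self _).trans ((norm_setIntegral_le_of_norm_le_const hD
      (fun q hq => (norm_norm (term k q)).trans_le (h_le k q hq))).trans_eq ?_)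
    ring
  have h_tsum : ∀ q, ∑' k, term k q = u q.1 * exp (a * q.1 * cos q.2) := by
    intro q
    rw [exp_eq_exp_ℝ, ← ((NormedSpace.expSeries_div_hasSum_exp (a * q.1 * cos q.2)).mul_left
      (u q.1)).tsum_eq]
    congr with k
    simp only [term, mul_pow]
    ring
  have h_prod : ∀ k, ∫ q in D, term k q =
      a ^ k / k ! * (∫ r in Ioc 0 R, u r * r ^ k) * ∫ θ in (-π)..π, cos θ ^ k := by
    intro k
    rw [Measure.volume_eq_prod, setIntegral_prod_mul (fun r => a ^ k / k ! * (u r * r ^ k))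
      (fun θ => cos θ ^ k), integral_const_mul,
      intervalIntegral.integral_of_le (by linarith [pi_pos]),
      integral_Ioc_eq_integral_Ioo (x := -π)]
  simpa only [h_prod, h_tsum] using hasSum_integral_of_summable_integral_norm h_int h_sum

theorem hasSum_setIntegral_mul_exp_mul_cos {u : ℝ → ℝ} (hu : Measurable u) {R M : ℝ}
    (hM : ∀ r ∈ Ioc 0 R, |u r| ≤ M) (a : ℝ) :
    HasSum (fun n : ℕ => 2 * π * (a / 2) ^ (2 * n) / (n ! : ℝ) ^ 2 *
        ∫ r in Ioc 0 R, u r * r ^ (2 * n))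
      (∫ q in Ioc 0 R ×ˢ Ioo (-π) π, u q.1 * exp (a * q.1 * cos q.2)) := by
  have h_odd : ∀ k ∉ range (2 * ·), a ^ k / k ! * (∫ r in Ioc 0 R, u r * r ^ k) *
      ∫ θ in (-π)..π, cos θ ^ k = 0 := by
    intro k hk
    obtain ⟨n, rfl⟩ : Odd k :=
      Nat.not_even_iff_odd.1 fun ⟨n, hn⟩ => hk ⟨n, by dsimp only; omega⟩
    rw [integral_cos_pow_odd, mul_zero]
  convert ((mul_right_injective₀ two_ne_zero).hasSum_iff h_odd).2
    (hasSum_setIntegral_mul_exp_mul_cos_pow hu hM a) using 2 with n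
  have h4 : (4 : ℝ) ^ n = 2 ^ (2 * n) := by rw [pow_mul]; norm_num
  simp only [Function.comp_apply, integral_cos_pow_even, div_pow, h4]
  field_simp

section
variable {E F G : Type*} [NormedAddCommGroup E] [InnerProductSpace ℝ E] [FiniteDimensional ℝ E]
  [MeasurableSpace E] [BorelSpace E] [NormedAddCommGroup F] [InnerProductSpace ℝ F]
  [FiniteDimensional ℝ F] [MeasurableSpace F] [BorelSpace F]
  [NormedAddCommGroup G] [NormedSpace ℝ G]

theorem LinearIsometryEquiv.integral_norm_norm_sub (e : E ≃ₗᵢ[ℝ] F) (Φ : ℝ → ℝ → G)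
    (x : F) : ∫ y, Φ ‖y‖ ‖x - y‖ = ∫ z, Φ ‖z‖ ‖e.symm x - z‖ := by
  rw [← e.measurePreserving.integral_comp e.toHomeomorph.measurableEmbedding]
  congr with z
  rw [e.norm_map, ← e.norm_map (e.symm x - z), map_sub, e.apply_symm_apply]
end

theorem Complex.integral_norm_norm_sub_eq_ofReal {G : Type*} [NormedAddCommGroup G]
    [NormedSpace ℝ G] (Φ : ℝ → ℝ → G) (w : ℂ) :
    ∫ z : ℂ, Φ ‖z‖ ‖w - z‖ = ∫ z : ℂ, Φ ‖z‖ ‖(‖w‖ : ℂ) - z‖ := by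
  have hw : (rotation (Circle.exp (arg w))).symm w = ‖w‖ := by
    rw [LinearIsometryEquiv.symm_apply_eq, rotation_apply, Circle.coe_exp, mul_comm,
      norm_mul_exp_arg_mul_I]
  rw [(rotation (Circle.exp (arg w))).integral_norm_norm_sub, hw]

theorem EuclideanSpace.integral_fin_two_norm_norm_sub {G : Type*} [NormedAddCommGroup G]
    [NormedSpace ℝ G] (Φ : ℝ → ℝ → G) (x : EuclideanSpace ℝ (Fin 2)) :
    ∫ y, Φ ‖y‖ ‖x - y‖ = ∫ z : ℂ, Φ ‖z‖ ‖(‖x‖ : ℂ) - z‖ := by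
  rw [Complex.orthonormalBasisOneI.repr.integral_norm_norm_sub,
    Complex.integral_norm_norm_sub_eq_ofReal, LinearIsometryEquiv.norm_map]

theorem Complex.norm_ofReal_sub_polarCoord_symm_sq (s : ℝ) (q : ℝ × ℝ) :
    ‖(s : ℂ) - Complex.polarCoord.symm q‖ ^ 2 =
      s ^ 2 + q.1 ^ 2 - 2 * s * q.1 * Real.cos q.2 := by
  rw [Complex.polarCoord_symm_apply, Complex.sq_norm, Complex.normSq_apply]
  simp only [Complex.sub_re, Complex.sub_im, Complex.add_re, Complex.add_im, Complex.mul_re,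
    Complex.mul_im, Complex.ofReal_re, Complex.ofReal_im, Complex.I_re, Complex.I_im, mul_zero,
    mul_one, zero_mul, add_zero, zero_add, sub_zero, zero_sub, sub_self, mul_neg, neg_mul, neg_neg]
  linear_combination q.1 ^ 2 * Real.sin_sq_add_cos_sq q.2

theorem integral_mul_gaussian_ofReal_sub (f : ℝ → ℝ) (p s : ℝ) :
    ∫ z : ℂ, f ‖z‖ * (p / π * exp (-p * ‖(s : ℂ) - z‖ ^ 2)) =
      p / π * exp (-p * s ^ 2) * ∫ q in polarCoord.target,
        q.1 * f q.1 * exp (-p * q.1 ^ 2) * exp (2 * p * s * q.1 * cos q.2) := by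
  rw [← Complex.integral_comp_polarCoord_symm, ← integral_const_mul]
  refine setIntegral_congr_fun polarCoord.open_target.measurableSet fun q hq => ?_
  have hr : 0 < q.1 := hq.1
  rw [smul_eq_mul, Complex.norm_polarCoord_symm, abs_of_pos hr,
    Complex.norm_ofReal_sub_polarCoord_symm_sq]
  have hexp : exp (-p * (s ^ 2 + q.1 ^ 2 - 2 * s * q.1 * cos q.2)) =
      exp (-p * s ^ 2) * exp (-p * q.1 ^ 2) * exp (2 * p * s * q.1 * cos q.2) := by
    rw [← exp_add, ← exp_add]
    ring_nf
  rw [hexp]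
  ring

theorem abs_mul_mul_exp_neg_mul_sq_le {r y R F p : ℝ} (hr : r ∈ Ioc 0 R) (hy : y ∈ Icc 0 F)
    (hp : 0 ≤ p) : |r * y * exp (-p * r ^ 2)| ≤ R * F := by
  have hexp : exp (-p * r ^ 2) ≤ 1 := exp_le_one_iff.2 (by rw [neg_mul, neg_nonpos]; positivity)
  have hR : 0 ≤ R := hr.1.le.trans hr.2
  calc |r * y * exp (-p * r ^ 2)| = r * y * exp (-p * r ^ 2) :=
        abs_of_nonneg (mul_nonneg (mul_nonneg hr.1.le hy.1) (exp_pos _).le)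
    _ ≤ R * F * 1 := mul_le_mul (mul_le_mul hr.2 hy.2 hy.1 hR) hexp (exp_pos _).le
        (mul_nonneg hR (hy.1.trans hy.2))
    _ = R * F := mul_one _

theorem convolved_profile_series_general
    (f : ℝ → ℝ) (F R₀ p : ℝ) (hp : 0 < p)
    (hmeas : Measurable f)
    (hpos : ∀ r : ℝ, 0 ≤ r → 0 ≤ f r)
    (hbd : ∀ r : ℝ, 0 ≤ r → f r ≤ F)
    (hsupp : ∀ r : ℝ, R₀ < r → f r = 0)
    (c : ℕ → ℝ)
    (hc : ∀ n : ℕ, c n =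
      2 * π * ∫ r in Ioi (0:ℝ), f r * r ^ (2 * n + 1) * Real.exp (-p * r ^ 2)) :
    ∀ x : EuclideanSpace ℝ (Fin 2),
      Summable (fun n : ℕ =>
        |c n * p ^ (2 * n) / ((n.factorial : ℝ)) ^ 2 * ‖x‖ ^ (2 * n)|) ∧
      (∫ y : EuclideanSpace ℝ (Fin 2),
          f ‖y‖ * (p / π * Real.exp (-p * ‖x - y‖ ^ 2))) =
        p / π * Real.exp (-p * ‖x‖ ^ 2) *
          ∑' n : ℕ, c n * p ^ (2 * n) / ((n.factorial : ℝ)) ^ 2 * ‖x‖ ^ (2 * n) := by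
  intro x
  set s := ‖x‖
  set u : ℝ → ℝ := fun r => r * f r * exp (-p * r ^ 2)
  have hu : ∀ r ∈ Ioc 0 R₀, |u r| ≤ R₀ * F := fun r hr =>
    abs_mul_mul_exp_neg_mul_sq_le hr ⟨hpos r hr.1.le, hbd r hr.1.le⟩ hp.le
  have hmoment : ∀ n : ℕ, ∫ r in Ioc 0 R₀, u r * r ^ (2 * n) = c n / (2 * π) := by
    intro n
    rw [hc, mul_div_cancel_left₀ _ (by positivity),
      setIntegral_eq_of_subset_of_forall_sdiff_eq_zero measurableSet_Ioi Ioc_subset_Ioi_self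
        fun r hr => by rw [hsupp r (not_le.1 fun h => hr.2 ⟨hr.1, h⟩), zero_mul, zero_mul]]
    congr with r
    ring
  have hseries : HasSum (fun n : ℕ => c n * p ^ (2 * n) / (n ! : ℝ) ^ 2 * s ^ (2 * n))
      (∫ q in Ioc 0 R₀ ×ˢ Ioo (-π) π, u q.1 * exp (2 * p * s * q.1 * cos q.2)) := by
    convert hasSum_setIntegral_mul_exp_mul_cos (by fun_prop) hu (2 * p * s) using 2 with n
    rw [hmoment]
    field_simp
    ring
  have hpolar : ∫ y, f ‖y‖ * (p / π * exp (-p * ‖x - y‖ ^ 2)) =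
      p / π * exp (-p * s ^ 2) *
        ∫ q in Ioc 0 R₀ ×ˢ Ioo (-π) π, u q.1 * exp (2 * p * s * q.1 * cos q.2) := by
    rw [EuclideanSpace.integral_fin_two_norm_norm_sub
      (fun r t => f r * (p / π * exp (-p * t ^ 2))), integral_mul_gaussian_ofReal_sub]
    congr 1
    refine setIntegral_eq_of_subset_of_forall_sdiff_eq_zero polarCoord.open_target.measurableSet
      (prod_mono Ioc_subset_Ioi_self subset_rfl) fun q hq => ?_
    rw [hsupp q.1 (not_le.1 fun h => hq.2 ⟨⟨hq.1.1, h⟩, hq.1.2⟩), mul_zero, zero_mul,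
      zero_mul]
  exact ⟨summable_abs_iff.2 hseries.summable, by rw [hpolar, hseries.tsum_eq]⟩

theorem convolved_profile_series
    (f : ℝ → ℝ) (F R₀ p : ℝ) (hp : 0 < p) (hR₀ : 0 < R₀)
    (hmeas : Measurable f)
    (hpos : ∀ r : ℝ, 0 ≤ r → 0 ≤ f r)
    (hbd : ∀ r : ℝ, 0 ≤ r → f r ≤ F)
    (hsupp : ∀ r : ℝ, R₀ < r → f r = 0)
    (c : ℕ → ℝ)
    (hc : ∀ n : ℕ, c n =
      2 * π * ∫ r in Ioi (0:ℝ), f r * r ^ (2 * n + 1) * Real.exp (-p * r ^ 2)) :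
    ∀ x : EuclideanSpace ℝ (Fin 2),
      Summable (fun n : ℕ =>
        |c n * p ^ (2 * n) / ((n.factorial : ℝ)) ^ 2 * ‖x‖ ^ (2 * n)|) ∧
      (∫ y : EuclideanSpace ℝ (Fin 2),
          f ‖y‖ * (p / π * Real.exp (-p * ‖x - y‖ ^ 2))) =
        p / π * Real.exp (-p * ‖x‖ ^ 2) *
          ∑' n : ℕ, c n * p ^ (2 * n) / ((n.factorial : ℝ)) ^ 2 * ‖x‖ ^ (2 * n) :=
  convolved_profile_series_general f F R₀ p hp hmeas hpos hbd hsupp c hc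
end

section
/- Under the hypotheses that f is nonnegative, bounded, and its moments satisfy c_n^{1/n} = o(n^{1/2}), the generalized moments satisfy c_n(p) = Σ_{k=0}^∞ (−1)^k (p^k / k!) c_{n+2k}, with the series absolutely convergent for all p ∈ [0,∞). -/
/-!
Expand `exp (-p r²)` in its power series and integrate term by term against the nonnegative
weight `f r * r ^ (n + 1)`; by Fubini–Tonelli for series this is legitimate as soon as
`∑ pᵏ / k! * c (n + 2k)` converges. Convergence comes from the growth hypothesis: eventually
`c m ≤ (ε √m) ^ m`, and with `m = n + 2k` and `mᵏ / k! ≤ eᵐ` the `k`-th term is at most a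
polynomial in `k` times `((ε e)² p) ^ k`, a geometric factor below `1` once `ε` is small.
-/

open MeasureTheory Set Real Filter Asymptotics
open scoped Nat

theorem Real.hasSum_pow_div_factorial_exp (x : ℝ) : HasSum (fun k : ℕ => x ^ k / k !) (exp x) :=
  exp_eq_exp_ℝ ▸ NormedSpace.expSeries_div_hasSum_exp x

theorem eventually_le_mul_sqrt_pow_of_isLittleO {c : ℕ → ℝ} (hc : ∀ m, 0 ≤ c m)
    (h : (fun n : ℕ => c n ^ (n : ℝ)⁻¹) =o[atTop] fun n : ℕ => (n : ℝ) ^ ((1 : ℝ) / 2))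
    {ε : ℝ} (hε : 0 < ε) : ∀ᶠ m : ℕ in atTop, c m ≤ (ε * √m) ^ m := by
  filter_upwards [h.bound hε, eventually_gt_atTop 0] with m hm hm0
  rw [norm_of_nonneg (rpow_nonneg (hc m) _), norm_of_nonneg (by positivity), ← sqrt_eq_rpow,
    rpow_inv_le_iff_of_pos (hc m) (by positivity) (by positivity), rpow_natCast] at hm
  exact hm

theorem pow_div_factorial_mul_sqrt_pow_le {p ε : ℝ} (hp : 0 ≤ p) (hε : 0 ≤ ε) (n : ℕ) {k : ℕ}
    (hk : 1 ≤ k) :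
    p ^ k / k ! * (ε * √(n + 2 * k : ℕ)) ^ (n + 2 * k) ≤
      (ε * exp 1 * (n + 2)) ^ n * (k ^ n * ((ε * exp 1) ^ 2 * p) ^ k) := by
  set m : ℝ := ((n + 2 * k : ℕ) : ℝ) with hm
  have hk' : (1 : ℝ) ≤ k := by exact_mod_cast hk
  have hsqrt : √m ≤ (n + 2) * k := by
    rw [sqrt_le_left (by positivity)]
    have hlin : (n : ℝ) + 2 * k ≤ (n + 2) * k := by nlinarith
    push_cast [hm]
    nlinarith
  have hexp : exp m = exp 1 ^ n * (exp 1 ^ 2) ^ k := by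
    rw [← pow_mul, ← pow_add, ← exp_nat_mul, mul_one]
  calc p ^ k / k ! * (ε * √m) ^ (n + 2 * k)
      = (ε * √m) ^ n * ((ε ^ 2 * p) ^ k * (m ^ k / k !)) := by
        rw [pow_add, pow_mul, mul_pow (b := √m) (n := 2), sq_sqrt (by positivity)]; ring
    _ ≤ (ε * ((n + 2) * k)) ^ n * ((ε ^ 2 * p) ^ k * exp m) := by
        gcongr
        exact pow_div_factorial_le_exp m (by positivity) k
    _ = (ε * exp 1 * (n + 2)) ^ n * (k ^ n * ((ε * exp 1) ^ 2 * p) ^ k) := by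
        rw [hexp]; simp only [mul_pow]; ring

theorem summable_pow_div_factorial_mul_of_isLittleO {c : ℕ → ℝ} (hc : ∀ m, 0 ≤ c m)
    (h : (fun n : ℕ => c n ^ (n : ℝ)⁻¹) =o[atTop] fun n : ℕ => (n : ℝ) ^ ((1 : ℝ) / 2))
    {p : ℝ} (hp : 0 ≤ p) (n : ℕ) : Summable fun k : ℕ => p ^ k / k ! * c (n + 2 * k) := by
  set ε := (exp 1 * (p + 1))⁻¹
  -- with this `ε` the geometric ratio is `p / (p + 1) ^ 2 < 1`
  have hq : ‖(ε * exp 1) ^ 2 * p‖ < 1 := by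
    have : ε * exp 1 = (p + 1)⁻¹ := by simp only [ε]; field_simp
    rw [this, inv_pow, inv_mul_eq_div, norm_of_nonneg (by positivity), div_lt_one (by positivity)]
    nlinarith
  have hgrowth : ∀ᶠ k : ℕ in atTop, c (n + 2 * k) ≤ (ε * √(n + 2 * k : ℕ)) ^ (n + 2 * k) :=
    (tendsto_atTop_mono (fun k => show k ≤ n + 2 * k by omega) tendsto_id).eventually
      (eventually_le_mul_sqrt_pow_of_isLittleO hc h (by positivity))
  refine .of_norm_bounded_eventually_nat
    ((summable_pow_mul_geometric_of_norm_lt_one n hq).mul_left ((ε * exp 1 * (n + 2)) ^ n)) ?_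
  filter_upwards [hgrowth, eventually_ge_atTop 1] with k hck hk
  rw [norm_of_nonneg (by have := hc (n + 2 * k); positivity)]
  exact (mul_le_mul_of_nonneg_left hck (by positivity)).trans
    (pow_div_factorial_mul_sqrt_pow_le hp (by positivity) n hk)

theorem hasSum_integral_mul_exp_neg_mul_sq {μ : Measure ℝ} {w : ℝ → ℝ} (hw : 0 ≤ᵐ[μ] w)
    (hint : ∀ k : ℕ, Integrable (fun r => w r * r ^ (2 * k)) μ) {p : ℝ}
    (hsum : Summable fun k : ℕ => |p| ^ k / k ! * ∫ r, w r * r ^ (2 * k) ∂μ) :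
    HasSum (fun k : ℕ => (-p) ^ k / k ! * ∫ r, w r * r ^ (2 * k) ∂μ)
      (∫ r, w r * exp (-p * r ^ 2) ∂μ) := by
  let term (k : ℕ) (r : ℝ) : ℝ := (-p) ^ k / k ! * (w r * r ^ (2 * k))
  have hpointwise (r : ℝ) : HasSum (term · r) (w r * exp (-p * r ^ 2)) := by
    have hterm : (term · r) = fun k => w r * ((-p * r ^ 2) ^ k / k !) := by
      funext k
      rw [mul_pow, ← pow_mul]
      ring
    exact hterm ▸ (hasSum_pow_div_factorial_exp _).mul_left (w r)
  have hnorm (k : ℕ) : ∫ r, ‖term k r‖ ∂μ = |p| ^ k / k ! * ∫ r, w r * r ^ (2 * k) ∂μ := by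
    rw [← integral_const_mul]
    refine integral_congr_ae (hw.mono fun r (hr : 0 ≤ w r) => ?_)
    have hnonneg : 0 ≤ w r * r ^ (2 * k) := by rw [pow_mul]; positivity
    simp [term, norm_of_nonneg hnonneg]
  have hseries := hasSum_integral_of_summable_integral_norm (F := term)
    (fun k => (hint k).const_mul _) (by simpa only [hnorm] using hsum)
  simpa only [term, integral_const_mul, fun r => (hpointwise r).tsum_eq] using hseries

theorem generalized_moment_series_general
    (f : ℝ → ℝ)
    (hpos : ∀ r : ℝ, 0 ≤ r → 0 ≤ f r)
    (c : ℕ → ℝ)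
    (hc : ∀ n : ℕ, c n = 2 * π * ∫ r in Ioi (0:ℝ), f r * r ^ (n + 1))
    (hInt : ∀ n : ℕ, IntegrableOn (fun r => f r * r ^ (n + 1)) (Ioi (0:ℝ)))
    (hlittleo : (fun n : ℕ => (c n) ^ ((n : ℝ)⁻¹)) =o[atTop]
      (fun n : ℕ => (n : ℝ) ^ ((1:ℝ)/2))) :
    ∀ p : ℝ, 0 ≤ p → ∀ n : ℕ,
      Summable (fun k : ℕ => |(-1 : ℝ) ^ k * p ^ k / (k.factorial : ℝ) * c (n + 2 * k)|) ∧
      (2 * π * ∫ r in Ioi (0:ℝ), f r * r ^ (n + 1) * Real.exp (-p * r ^ 2)) =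
        ∑' k : ℕ, (-1 : ℝ) ^ k * p ^ k / (k.factorial : ℝ) * c (n + 2 * k) := by
  intro p hp n
  have hw : ∀ᵐ r ∂volume.restrict (Ioi 0), 0 ≤ f r * r ^ (n + 1) :=
    ae_restrict_of_forall_mem measurableSet_Ioi fun r (hr : 0 < r) =>
      mul_nonneg (hpos r hr.le) (pow_nonneg hr.le _)
  have hc_nonneg (m : ℕ) : 0 ≤ c m := by
    rw [hc]
    exact mul_nonneg (by positivity) (setIntegral_nonneg measurableSet_Ioi fun r (hr : 0 < r) =>
      mul_nonneg (hpos r hr.le) (pow_nonneg hr.le _))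
  have hmoment (k : ℕ) :
      ∫ r in Ioi 0, f r * r ^ (n + 1) * r ^ (2 * k) = c (n + 2 * k) / (2 * π) := by
    rw [hc, mul_div_cancel_left₀ _ (by positivity)]
    simp only [mul_assoc, ← pow_add, Nat.add_right_comm n 1]
  have hsum := summable_pow_div_factorial_mul_of_isLittleO hc_nonneg hlittleo hp n
  have hsum_moment : Summable fun k : ℕ =>
      |p| ^ k / k ! * ∫ r in Ioi 0, f r * r ^ (n + 1) * r ^ (2 * k) := by
    simp_rw [hmoment, abs_of_nonneg hp, ← mul_div_assoc]
    exact hsum.div_const _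
  have hseries := hasSum_integral_mul_exp_neg_mul_sq hw (fun k => by
    simpa only [IntegrableOn, mul_assoc, ← pow_add, Nat.add_right_comm n 1] using hInt (n + 2 * k))
    hsum_moment
  refine ⟨hsum.congr fun k => ?_, ?_⟩
  · simp [abs_mul, abs_div, abs_of_nonneg hp, abs_of_nonneg (hc_nonneg _)]
  · rw [← (hseries.mul_left (2 * π)).tsum_eq]
    congr 1; funext k
    rw [hmoment, neg_pow]
    field_simp

theorem generalized_moment_series
    (f : ℝ → ℝ) (F : ℝ)
    (hmeas : Measurable f)
    (hpos : ∀ r : ℝ, 0 ≤ r → 0 ≤ f r)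
    (hbd : ∀ r : ℝ, 0 ≤ r → f r ≤ F)
    (c : ℕ → ℝ)
    (hc : ∀ n : ℕ, c n = 2 * π * ∫ r in Ioi (0:ℝ), f r * r ^ (n + 1))
    (hInt : ∀ n : ℕ, IntegrableOn (fun r => f r * r ^ (n + 1)) (Ioi (0:ℝ)))
    (hlittleo : (fun n : ℕ => (c n) ^ ((n : ℝ)⁻¹)) =o[atTop]
      (fun n : ℕ => (n : ℝ) ^ ((1:ℝ)/2))) :
    ∀ p : ℝ, 0 ≤ p → ∀ n : ℕ,
      Summable (fun k : ℕ => |(-1 : ℝ) ^ k * p ^ k / (k.factorial : ℝ) * c (n + 2 * k)|) ∧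
      (2 * π * ∫ r in Ioi (0:ℝ), f r * r ^ (n + 1) * Real.exp (-p * r ^ 2)) =
        ∑' k : ℕ, (-1 : ℝ) ^ k * p ^ k / (k.factorial : ℝ) * c (n + 2 * k) :=
  generalized_moment_series_general f hpos c hc hInt hlittleo
end

section
/- For the constant volume emissivity shell with inner radius r_i ∈ [0,1), outer radius 1, and emissivity j_ν = 1/(4π), the surface brightness profile f(r) (given by the chord-length formula) has moments c_{2n} = ∫₀^1 r^{2n+1}√(1−r²) dr − ∫₀^{r_i} r^{2n+1}√(r_i²−r²) dr = Σ_{k=0}^n (−1)^{k+n} C(n,k) (1 − r_i^{2n+3})/(2n+3−2k). -/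
/-!
For `r ≥ 0` the profile equals `(2π)⁻¹ (√(1 - r²) - √(rᵢ² - r²))`, since `Real.sqrt` vanishes on
nonpositive arguments; so the moment is the difference of the two disc moments
`∫₀^a r^(2n+1) √(a² - r²) dr` with `a = 1` and `a = rᵢ`. To compute these, write
`r^(2n+1) = r (a² - (a² - r²))^n`, expand binomially, and integrate each term
`r (a² - r²)^k √(a² - r²)` using the antiderivative `-(a² - r²)^(k+1) √(a² - r²) / (2k + 3)`.
-/

open MeasureTheory Set Real

theorem hasDerivAt_sq_sub_sq_pow_succ_mul_sqrt {a r : ℝ} (k : ℕ) (hr : r ^ 2 < a ^ 2) :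
    HasDerivAt (fun x : ℝ => (a ^ 2 - x ^ 2) ^ (k + 1) * √(a ^ 2 - x ^ 2))
      (-(2 * k + 3) * (r * (a ^ 2 - r ^ 2) ^ k * √(a ^ 2 - r ^ 2))) r := by
  have hpos : 0 < a ^ 2 - r ^ 2 := sub_pos.mpr hr
  have hbase : HasDerivAt (fun x : ℝ => a ^ 2 - x ^ 2) (-(2 * r)) r := by
    simpa using (hasDerivAt_pow 2 r).const_sub (a ^ 2)
  refine ((hbase.fun_pow (k + 1)).fun_mul (hbase.sqrt hpos.ne')).congr_deriv ?_
  obtain ⟨s, hs_def⟩ : ∃ s, s = √(a ^ 2 - r ^ 2) := ⟨_, rfl⟩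
  have hs : 0 < s := hs_def ▸ sqrt_pos.mpr hpos
  have hsq : a ^ 2 - r ^ 2 = s ^ 2 := by rw [hs_def, sq_sqrt hpos.le]
  rw [← hs_def, hsq]
  field_simp
  push_cast
  ring

theorem integral_mul_sq_sub_sq_pow_mul_sqrt {a : ℝ} (ha : 0 ≤ a) (k : ℕ) :
    ∫ r in (0 : ℝ)..a, r * (a ^ 2 - r ^ 2) ^ k * √(a ^ 2 - r ^ 2) =
      a ^ (2 * k + 3) / (2 * k + 3) := by
  have hderiv : ∀ r ∈ Ioo 0 a, HasDerivAt
      (fun x : ℝ => -((a ^ 2 - x ^ 2) ^ (k + 1) * √(a ^ 2 - x ^ 2)) / (2 * k + 3))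
      (r * (a ^ 2 - r ^ 2) ^ k * √(a ^ 2 - r ^ 2)) r := fun r hr =>
    ((hasDerivAt_sq_sub_sq_pow_succ_mul_sqrt k
      (pow_lt_pow_left₀ hr.2 hr.1.le two_ne_zero)).neg.div_const _).congr_deriv (by field_simp)
  rw [intervalIntegral.integral_eq_sub_of_hasDerivAt_of_le ha (by fun_prop) hderiv
    (by apply Continuous.intervalIntegrable; fun_prop)]
  simp [sqrt_sq ha]
  ring

theorem pow_two_mul_add_one_eq_sum_choose {R : Type*} [CommRing R] (x a : R) (n : ℕ) :
    x ^ (2 * n + 1) = ∑ k ∈ Finset.range (n + 1),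
      (-1) ^ (k + n) * n.choose k * a ^ (2 * k) * (x * (a ^ 2 - x ^ 2) ^ (n - k)) := by
  rw [pow_succ, pow_mul, show x ^ 2 = a ^ 2 - (a ^ 2 - x ^ 2) by ring, sub_pow, Finset.sum_mul]
  refine Finset.sum_congr rfl fun k _ => ?_
  rw [pow_mul]
  ring

theorem integral_pow_mul_sqrt_sq_sub_sq {a : ℝ} (ha : 0 ≤ a) (n : ℕ) :
    ∫ r in (0 : ℝ)..a, r ^ (2 * n + 1) * √(a ^ 2 - r ^ 2) =
      ∑ k ∈ Finset.range (n + 1),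
        (-1 : ℝ) ^ (k + n) * n.choose k * a ^ (2 * n + 3) / (2 * n + 3 - 2 * k) := by
  simp_rw [pow_two_mul_add_one_eq_sum_choose _ a n, Finset.sum_mul]
  rw [intervalIntegral.integral_finsetSum fun k _ => by
    apply Continuous.intervalIntegrable; fun_prop]
  refine Finset.sum_congr rfl fun k hk => ?_
  have hkn : k ≤ n := Nat.lt_succ_iff.mp (Finset.mem_range.mp hk)
  have hpow : a ^ (2 * k) * a ^ (2 * (n - k) + 3) = a ^ (2 * n + 3) := by
    rw [← pow_add]; congr 1; omega
  simp_rw [mul_assoc _ (_ * _) (√_)]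
  rw [intervalIntegral.integral_const_mul, integral_mul_sq_sub_sq_pow_mul_sqrt ha,
    Nat.cast_sub hkn, ← hpow]
  ring

theorem pow_mul_sqrt_sq_sub_sq_eq_zero {a r : ℝ} (p : ℕ) (hr : |a| ≤ r) :
    r ^ p * √(a ^ 2 - r ^ 2) = 0 := by
  rw [sqrt_eq_zero_of_nonpos (by nlinarith [sq_abs a, abs_nonneg a]), mul_zero]

theorem integrableOn_Ioi_pow_mul_sqrt_sq_sub_sq (a : ℝ) (p : ℕ) :
    IntegrableOn (fun r => r ^ p * √(a ^ 2 - r ^ 2)) (Ioi 0) :=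
  (Continuous.integrableOn_Ioc (a := 0) (b := |a|) (by fun_prop)).of_forall_sdiff_eq_zero
    measurableSet_Ioi fun r (hr : r ∈ Ioi 0 \ Ioc 0 |a|) =>
      pow_mul_sqrt_sq_sub_sq_eq_zero p (le_of_not_ge fun h => hr.2 ⟨hr.1, h⟩)

theorem setIntegral_Ioi_pow_mul_sqrt_sq_sub_sq {a : ℝ} (ha : 0 ≤ a) (p : ℕ) :
    ∫ r in Ioi 0, r ^ p * √(a ^ 2 - r ^ 2) = ∫ r in (0 : ℝ)..a, r ^ p * √(a ^ 2 - r ^ 2) := by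
  rw [intervalIntegral.integral_of_le ha]
  refine setIntegral_eq_of_subset_of_forall_sdiff_eq_zero measurableSet_Ioi Ioc_subset_Ioi_self
    fun r hr => pow_mul_sqrt_sq_sub_sq_eq_zero p ?_
  rw [abs_of_nonneg ha]
  exact le_of_not_ge fun h => hr.2 ⟨hr.1, h⟩

theorem shell_profile_eq (c : ℝ) {rᵢ r : ℝ} (hri : 0 ≤ rᵢ) (hr : 0 ≤ r) :
    (if r ≤ rᵢ then c * (√(1 - r ^ 2) - √(rᵢ ^ 2 - r ^ 2))
      else if r ≤ 1 then c * √(1 - r ^ 2) else 0) =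
      c * (√(1 - r ^ 2) - √(rᵢ ^ 2 - r ^ 2)) := by
  split_ifs with h₁ h₂
  · rfl
  · rw [sqrt_eq_zero_of_nonpos (x := rᵢ ^ 2 - r ^ 2) (by nlinarith), sub_zero]
  · rw [sqrt_eq_zero_of_nonpos (x := rᵢ ^ 2 - r ^ 2) (by nlinarith),
      sqrt_eq_zero_of_nonpos (x := 1 - r ^ 2) (by nlinarith), sub_zero, mul_zero]

theorem shell_moments_general
    (rᵢ : ℝ) (hri : 0 ≤ rᵢ)
    (f : ℝ → ℝ)
    (hf : ∀ r : ℝ, 0 ≤ r →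
      f r = if r ≤ rᵢ then (1 / (2 * π)) * (Real.sqrt (1 - r ^ 2) - Real.sqrt (rᵢ ^ 2 - r ^ 2))
            else if r ≤ 1 then (1 / (2 * π)) * Real.sqrt (1 - r ^ 2)
            else 0) :
    ∀ n : ℕ,
      2 * π * (∫ r in Ioi (0:ℝ), f r * r ^ (2 * n + 1)) =
        (∫ r in (0:ℝ)..1, r ^ (2 * n + 1) * Real.sqrt (1 - r ^ 2)) -
          (∫ r in (0:ℝ)..rᵢ, r ^ (2 * n + 1) * Real.sqrt (rᵢ ^ 2 - r ^ 2)) ∧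
      2 * π * (∫ r in Ioi (0:ℝ), f r * r ^ (2 * n + 1)) =
        ∑ k ∈ Finset.range (n + 1),
          (-1 : ℝ) ^ (k + n) * (n.choose k : ℝ) * (1 - rᵢ ^ (2 * n + 3)) / (2 * n + 3 - 2 * k) := by
  intro n
  have hone : ∀ r : ℝ, 1 - r ^ 2 = 1 ^ 2 - r ^ 2 := fun r => by rw [one_pow]
  simp_rw [hone]
  have hmoment : 2 * π * (∫ r in Ioi (0:ℝ), f r * r ^ (2 * n + 1)) =
      (∫ r in (0:ℝ)..1, r ^ (2 * n + 1) * √(1 ^ 2 - r ^ 2)) -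
        ∫ r in (0:ℝ)..rᵢ, r ^ (2 * n + 1) * √(rᵢ ^ 2 - r ^ 2) := calc
    _ = 2 * π * ∫ r in Ioi (0:ℝ), (2 * π)⁻¹ *
          (r ^ (2 * n + 1) * √(1 ^ 2 - r ^ 2) - r ^ (2 * n + 1) * √(rᵢ ^ 2 - r ^ 2)) := by
      refine congrArg _ (setIntegral_congr_fun measurableSet_Ioi fun r hr => ?_)
      rw [hf r (le_of_lt hr), shell_profile_eq _ hri (le_of_lt hr), one_pow]
      ring
    _ = _ := by
      rw [integral_const_mul, ← mul_assoc, mul_inv_cancel₀ (by positivity), one_mul,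
        integral_sub (integrableOn_Ioi_pow_mul_sqrt_sq_sub_sq _ _)
          (integrableOn_Ioi_pow_mul_sqrt_sq_sub_sq _ _),
        setIntegral_Ioi_pow_mul_sqrt_sq_sub_sq zero_le_one,
        setIntegral_Ioi_pow_mul_sqrt_sq_sub_sq hri]
  refine ⟨hmoment, ?_⟩
  rw [hmoment, integral_pow_mul_sqrt_sq_sub_sq zero_le_one, integral_pow_mul_sqrt_sq_sub_sq hri,
    ← Finset.sum_sub_distrib]
  refine Finset.sum_congr rfl fun k _ => ?_
  rw [one_pow]
  ring

theorem shell_moments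
    (rᵢ : ℝ) (hri : 0 ≤ rᵢ) (hri1 : rᵢ < 1)
    (f : ℝ → ℝ)
    (hf : ∀ r : ℝ, 0 ≤ r →
      f r = if r ≤ rᵢ then (1 / (2 * π)) * (Real.sqrt (1 - r ^ 2) - Real.sqrt (rᵢ ^ 2 - r ^ 2))
            else if r ≤ 1 then (1 / (2 * π)) * Real.sqrt (1 - r ^ 2)
            else 0) :
    ∀ n : ℕ,
      2 * π * (∫ r in Ioi (0:ℝ), f r * r ^ (2 * n + 1)) =
        (∫ r in (0:ℝ)..1, r ^ (2 * n + 1) * Real.sqrt (1 - r ^ 2)) -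
          (∫ r in (0:ℝ)..rᵢ, r ^ (2 * n + 1) * Real.sqrt (rᵢ ^ 2 - r ^ 2)) ∧
      2 * π * (∫ r in Ioi (0:ℝ), f r * r ^ (2 * n + 1)) =
        ∑ k ∈ Finset.range (n + 1),
          (-1 : ℝ) ^ (k + n) * (n.choose k : ℝ) * (1 - rᵢ ^ (2 * n + 3)) / (2 * n + 3 - 2 * k) :=
  shell_moments_general rᵢ hri f hf
end

section
/- For the constant volume emissivity shell with outer radius 1 and inner radius r_i ∈ [0,1), the limiting conversion factor is γ(0) = √( 5(1 − r_i³) / (2 (1 − r_i⁵) ln 2) ), where γ(0) = √(c₀/(c₂ ln 2)) and c₀, c₂ are the zeroth and second radial moments of the shell profile. -/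
/-!
The substitution `u = a² - r²` turns each moment `∫₀ᵃ r^(2n+1) √(a² - r²) dr` into half of an
integral of a polynomial times `√u` over `[0, a²]`, i.e. of half-integer powers of `u`. This gives
`c₀ = (1 - rᵢ³)/3` and `c₂ = 2(1 - rᵢ⁵)/15`.
-/

open MeasureTheory Set Real intervalIntegral

theorem integral_mul_comp_sq_sub_sq (a : ℝ) {g : ℝ → ℝ} (hg : Continuous g) :
    ∫ r in (0:ℝ)..a, r * g (a ^ 2 - r ^ 2) = (∫ u in (0:ℝ)..a ^ 2, g u) / 2 := by
  have hsubst := integral_comp_mul_deriv (a := 0) (b := a) (f := fun r => a ^ 2 - r ^ 2)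
    (f' := fun r => -(2 * r)) (g := g)
    (fun x _ => by simpa using (hasDerivAt_pow 2 x).const_sub (a ^ 2)) (by fun_prop) hg
  have hlhs : ∫ r in (0:ℝ)..a, (g ∘ fun r => a ^ 2 - r ^ 2) r * -(2 * r)
      = -2 * ∫ r in (0:ℝ)..a, r * g (a ^ 2 - r ^ 2) := by
    rw [← intervalIntegral.integral_const_mul]
    congr 1; ext r; simp only [Function.comp]; ring
  rw [hlhs, sub_self, zero_pow two_ne_zero, sub_zero, integral_symm 0 (a ^ 2)] at hsubst
  linarith

theorem integral_pow_mul_sqrt_of_sq (n : ℕ) {a : ℝ} (ha : 0 ≤ a) :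
    ∫ u in (0:ℝ)..a ^ 2, u ^ n * √u = 2 * a ^ (2 * n + 3) / (2 * n + 3) := by
  have hrpow : EqOn (fun u : ℝ => u ^ n * √u) (fun u => u ^ ((n : ℝ) + 1 / 2)) (uIcc 0 (a ^ 2)) := by
    intro u hu
    rw [uIcc_of_le (by positivity)] at hu
    simp only [rpow_add' hu.1 (by positivity : (n : ℝ) + 1 / 2 ≠ 0), rpow_natCast, sqrt_eq_rpow]
  rw [integral_congr hrpow, integral_rpow (Or.inl (by linarith [(n.cast_nonneg : (0:ℝ) ≤ n)])),
    zero_rpow (by positivity : (0:ℝ) < (n:ℝ) + 1 / 2 + 1).ne',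
    ← rpow_natCast a 2, ← rpow_mul ha, ← rpow_natCast a (2 * n + 3)]
  push_cast
  field_simp
  ring_nf

theorem integral_mul_sqrt_sq_sub_sq {a : ℝ} (ha : 0 ≤ a) :
    ∫ r in (0:ℝ)..a, r * √(a ^ 2 - r ^ 2) = a ^ 3 / 3 := by
  have h := integral_pow_mul_sqrt_of_sq 0 ha
  simp only [pow_zero, one_mul] at h
  rw [integral_mul_comp_sq_sub_sq a continuous_sqrt, h]
  norm_num
  ring

theorem integral_pow_three_mul_sqrt_sq_sub_sq {a : ℝ} (ha : 0 ≤ a) :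
    ∫ r in (0:ℝ)..a, r ^ 3 * √(a ^ 2 - r ^ 2) = 2 * a ^ 5 / 15 := by
  have hfactor : (fun r : ℝ => r ^ 3 * √(a ^ 2 - r ^ 2))
      = fun r => r * (fun u => a ^ 2 * (u ^ 0 * √u) - u ^ 1 * √u) (a ^ 2 - r ^ 2) := by
    ext r; ring
  have hint (n : ℕ) : IntervalIntegrable (fun u : ℝ => u ^ n * √u) volume 0 (a ^ 2) :=
    ((continuous_pow n).mul continuous_sqrt).intervalIntegrable _ _
  rw [hfactor, integral_mul_comp_sq_sub_sq a
      (g := fun u => a ^ 2 * (u ^ 0 * √u) - u ^ 1 * √u) (by fun_prop),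
    integral_sub ((hint 0).const_mul _) (hint 1), intervalIntegral.integral_const_mul,
    integral_pow_mul_sqrt_of_sq 0 ha, integral_pow_mul_sqrt_of_sq 1 ha]
  norm_num
  ring

theorem shell_gamma_zero_general
    (rᵢ : ℝ) (hri : 0 ≤ rᵢ)
    (c₀ c₂ : ℝ)
    (hc₀ : c₀ = (∫ r in (0:ℝ)..1, r * Real.sqrt (1 - r ^ 2)) -
      (∫ r in (0:ℝ)..rᵢ, r * Real.sqrt (rᵢ ^ 2 - r ^ 2)))
    (hc₂ : c₂ = (∫ r in (0:ℝ)..1, r ^ 3 * Real.sqrt (1 - r ^ 2)) -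
      (∫ r in (0:ℝ)..rᵢ, r ^ 3 * Real.sqrt (rᵢ ^ 2 - r ^ 2))) :
    Real.sqrt (c₀ / (c₂ * Real.log 2)) =
      Real.sqrt (5 * (1 - rᵢ ^ 3) / (2 * (1 - rᵢ ^ 5) * Real.log 2)) := by
  have hunit₁ := integral_mul_sqrt_sq_sub_sq zero_le_one
  have hunit₃ := integral_pow_three_mul_sqrt_sq_sub_sq zero_le_one
  simp only [one_pow] at hunit₁ hunit₃
  have hc₀' : c₀ = (1 - rᵢ ^ 3) / 3 := by
    rw [hc₀, hunit₁, integral_mul_sqrt_sq_sub_sq hri]; ring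
  have hc₂' : c₂ = 2 / 15 * (1 - rᵢ ^ 5) := by
    rw [hc₂, hunit₃, integral_pow_three_mul_sqrt_sq_sub_sq hri]; ring
  rw [hc₀', hc₂']
  congr 1
  -- `(x * y)⁻¹ = x⁻¹ * y⁻¹` holds in any field, even when a factor is zero
  simp only [div_eq_mul_inv, mul_inv]
  ring

theorem shell_gamma_zero
    (rᵢ : ℝ) (hri : 0 ≤ rᵢ) (hri1 : rᵢ < 1)
    (c₀ c₂ : ℝ)
    (hc₀ : c₀ = (∫ r in (0:ℝ)..1, r * Real.sqrt (1 - r ^ 2)) -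
      (∫ r in (0:ℝ)..rᵢ, r * Real.sqrt (rᵢ ^ 2 - r ^ 2)))
    (hc₂ : c₂ = (∫ r in (0:ℝ)..1, r ^ 3 * Real.sqrt (1 - r ^ 2)) -
      (∫ r in (0:ℝ)..rᵢ, r ^ 3 * Real.sqrt (rᵢ ^ 2 - r ^ 2))) :
    Real.sqrt (c₀ / (c₂ * Real.log 2)) =
      Real.sqrt (5 * (1 - rᵢ ^ 3) / (2 * (1 - rᵢ ^ 5) * Real.log 2)) :=
  shell_gamma_zero_general rᵢ hri c₀ c₂ hc₀ hc₂
end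

section
/- For all n, k ∈ ℕ with k ≤ n, the identity Σ_{i=k}^n (−1)^k (a_{n,i}/k!) Σ_{l=0}^k (−1)^l C(k,l) l^i = n!² / ((n−k)! k!²) holds, where the coefficients a_{n,i} are defined by (l+n)!/l! = Σ_{i=0}^n a_{n,i} l^i for all l ∈ ℕ (i.e., a_{n,i} are unsigned Stirling-type coefficients of the rising factorial). -/
/-!
The inner sum `∑ l ≤ k, (-1)^l C(k,l) f l` is `(-1)^k` times the `k`-th forward difference of `f`
at `0`. It kills `l ↦ l^i` for `i < k`, so the outer sum may be extended to all `i ≤ n` and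
resummed into the `k`-th difference of `l ↦ (l+n)!/l! = n! C(l+n, n)`, which is `n! C(n, k)`
because `Δ C(·, m+1) = C(·, m)`.
-/

open Finset Function Nat fwdDiff

theorem fwdDiff_iter_comp_addMonoidHom {M M' G : Type*} [AddCommMonoid M] [AddCommMonoid M']
    [AddCommGroup G] (g : M →+ M') (f : M' → G) (h y : M) (k : ℕ) :
    (Δ_[h])^[k] (f ∘ g) y = (Δ_[g h])^[k] f (g y) := by
  simp [fwdDiff_iter_eq_sum_shift]

section AlternatingSum

variable {R : Type*} [CommRing R]

theorem sum_range_neg_one_pow_mul_choose_mul_eq_fwdDiff_iter (f : ℕ → R) (k : ℕ) :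
    ∑ l ∈ range (k + 1), (-1) ^ l * k.choose l * f l = (-1) ^ k * (Δ_[1])^[k] f 0 := by
  rw [fwdDiff_iter_eq_sum_shift, mul_sum]
  refine sum_congr rfl fun l hl ↦ ?_
  obtain ⟨j, rfl⟩ := Nat.exists_eq_add_of_le (Nat.le_of_lt_succ (mem_range.mp hl))
  have hsq : ((-1 : R) ^ j) ^ 2 = 1 := by rw [← pow_mul, pow_mul', neg_one_sq, one_pow]
  simp only [zero_add, smul_eq_mul, zsmul_eq_mul, Int.cast_mul, Int.cast_pow, Int.cast_neg,
    Int.cast_one, Int.cast_natCast, Nat.add_sub_cancel_left, pow_add, mul_one]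
  linear_combination -(-1) ^ l * ((l + j).choose l : R) * f l * hsq

theorem sum_range_neg_one_pow_mul_choose_mul_pow_eq_zero_of_lt {i k : ℕ} (h : i < k) :
    ∑ l ∈ range (k + 1), (-1) ^ l * k.choose l * (l : R) ^ i = 0 := by
  have h_cast := fwdDiff_iter_comp_addMonoidHom (Nat.castAddMonoidHom R) (· ^ i) 1 0 k
  simp only [comp_def, Nat.coe_castAddMonoidHom, Nat.cast_one, Nat.cast_zero,
    fwdDiff_iter_pow_eq_zero_of_lt h, Pi.zero_apply] at h_cast
  rw [sum_range_neg_one_pow_mul_choose_mul_eq_fwdDiff_iter, h_cast, mul_zero]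

end AlternatingSum

theorem sum_range_neg_one_pow_mul_choose_mul_add_choose {k n : ℕ} (hk : k ≤ n) :
    ∑ l ∈ range (k + 1), (-1) ^ l * k.choose l * ((l + n).choose n : ℤ) =
      (-1) ^ k * n.choose k := by
  obtain ⟨j, rfl⟩ := Nat.exists_eq_add_of_le hk
  rw [sum_range_neg_one_pow_mul_choose_mul_eq_fwdDiff_iter (fun l ↦ ((l + (k + j)).choose (k + j) : ℤ)),
    fwdDiff_iter_comp_add (f := fun x : ℕ ↦ (x.choose (k + j) : ℤ)), fwdDiff_iter_choose,
    zero_add, Nat.choose_symm_add]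

theorem cast_add_factorial_div_factorial {K : Type*} [Field K] [CharZero K] (l n : ℕ) :
    ((l + n)! : K) / l ! = n ! * (l + n).choose n := by
  rw [← add_choose_mul_factorial_mul_factorial l n]
  push_cast
  rw [mul_right_comm, mul_div_cancel_right₀ _ (cast_ne_zero.mpr (factorial_ne_zero l)), mul_comm]

theorem bnk_identity
    (n k : ℕ) (hk : k ≤ n)
    (a : ℕ → ℝ)
    (ha : ∀ l : ℕ, (((l + n).factorial : ℝ) / (l.factorial : ℝ)) =
      ∑ i ∈ Finset.range (n + 1), a i * (l : ℝ) ^ i) :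
    ∑ i ∈ Finset.Icc k n, (-1 : ℝ) ^ k * (a i / (k.factorial : ℝ)) *
        ∑ l ∈ Finset.range (k + 1), (-1 : ℝ) ^ l * (k.choose l : ℝ) * (l : ℝ) ^ i =
      ((n.factorial : ℝ)) ^ 2 / (((n - k).factorial : ℝ) * ((k.factorial : ℝ)) ^ 2) := by
  set S : ℕ → ℝ := fun i ↦ ∑ l ∈ range (k + 1), (-1) ^ l * k.choose l * (l : ℝ) ^ i
  have h_extend : ∑ i ∈ Icc k n, a i * S i = ∑ i ∈ range (n + 1), a i * S i := by
    refine sum_subset (fun i hi ↦ ?_) fun i hi hi' ↦ ?_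
    · simp only [mem_Icc, mem_range] at hi ⊢
      omega
    · simp only [mem_Icc, mem_range, not_and, not_le] at hi hi'
      rw [show S i = 0 from sum_range_neg_one_pow_mul_choose_mul_pow_eq_zero_of_lt (by omega), mul_zero]
  have h_swap : ∑ i ∈ range (n + 1), a i * S i =
      ∑ l ∈ range (k + 1), (-1) ^ l * k.choose l * ((l + n)! / l ! : ℝ) := by
    simp_rw [ha, S, mul_sum]
    rw [sum_comm]
    refine sum_congr rfl fun l _ ↦ sum_congr rfl fun i _ ↦ by ring
  have h_alt : ∑ l ∈ range (k + 1), (-1 : ℝ) ^ l * k.choose l * (l + n).choose n =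
      (-1) ^ k * n.choose k := by
    exact_mod_cast sum_range_neg_one_pow_mul_choose_mul_add_choose hk
  calc _ = (-1) ^ k / k ! * ∑ i ∈ Icc k n, a i * S i := by
        rw [mul_sum]
        refine sum_congr rfl fun i _ ↦ by ring
    _ = (-1) ^ k / k ! * (n ! * ((-1) ^ k * n.choose k)) := by
        simp_rw [h_extend, h_swap, ← h_alt, mul_sum, cast_add_factorial_div_factorial]
        refine sum_congr rfl fun l _ ↦ by ring
    _ = _ := by
        rw [cast_choose ℝ hk]
        field_simp
        rw [← pow_mul, pow_mul', neg_one_sq, one_pow]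
end

section
/- Let f be a nonnegative, bounded, compactly supported circularly symmetric profile with moments c_{2n}, and let f_c be its convolution with the normalized gaussian (p/π)e^{−p|x|²}. Then the moments of the convolved profile satisfy c'_{2n} = Σ_{k=0}^n [n!²/((n−k)! k!²)] c_{2k} / p^{n−k}; in particular c'₀ = c₀ and c'₂ = c₀/p + c₂. -/
/-!
In complex coordinates `‖w + y‖ ^ (2 * n) = ((w + y) * (conj w + conj y)) ^ n` expands into
monomials `w ^ i * conj w ^ j`. Against the radial gaussian `(p / π) * exp (-p * ‖w‖ ^ 2)` those
with `i ≠ j` integrate to zero by rotation invariance, while the diagonal ones give the gaussian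
moments `i ! / p ^ i`; so the gaussian average of `‖· + y‖ ^ (2 * n)` is
`∑ i, (n.choose i) ^ 2 * i ! * ‖y‖ ^ (2 * (n - i)) / p ^ i`. Fubini (legitimate because `f` is
bounded with compact support) turns this into the moment identity, after reading off the radial
profile of the convolution at an arbitrary point of the right norm by reflection invariance.
-/

open MeasureTheory Set Real Metric Finset Module
open scoped Nat ComplexConjugate

theorem HasCompactSupport.integrable_mul_continuous {X : Type*} [TopologicalSpace X]
    [T2Space X] [MeasurableSpace X] [OpensMeasurableSpace X] {μ : Measure X}
    [IsFiniteMeasureOnCompacts μ] {u g : X → ℝ} {C : ℝ} (hu : AEStronglyMeasurable u μ)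
    (hC : ∀ x, ‖u x‖ ≤ C) (hs : HasCompactSupport u) (hg : Continuous g) :
    Integrable (fun x => u x * g x) μ := by
  have hon : IntegrableOn u (tsupport u) μ :=
    Measure.integrableOn_of_bounded hs.measure_lt_top.ne hu (ae_of_all _ hC)
  rw [← integrableOn_iff_integrable_of_support_subset
    ((Function.support_mul_subset_left _ _).trans (subset_tsupport u))]
  exact hon.mul_continuousOn hg.continuousOn hs

theorem integral_integral_mul_sub_mul {G : Type*} [AddGroup G] [MeasurableSpace G]
    [MeasurableAdd₂ G] [MeasurableNeg G] {μ : Measure G} [SFinite μ] [μ.IsAddRightInvariant]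
    {u k w : G → ℝ}
    (h : Integrable (fun q : G × G => u q.2 * k q.1 * w (q.1 + q.2)) (μ.prod μ)) :
    ∫ x, (∫ y, u y * k (x - y) ∂μ) * w x ∂μ = ∫ y, u y * ∫ z, k z * w (z + y) ∂μ ∂μ := by
  have hshear : Integrable (fun q : G × G => u q.2 * k (q.1 - q.2) * w q.1) (μ.prod μ) := by
    have := (measurePreserving_sub_prod μ μ).integrable_comp h.aestronglyMeasurable
    simpa [Function.comp_def] using this.mpr h
  simp_rw [← integral_mul_const]
  rw [integral_integral_swap hshear]
  refine integral_congr_ae (ae_of_all _ fun y => ?_)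
  dsimp only
  rw [← integral_const_mul, ← integral_add_right_eq_self _ y]
  simp only [add_sub_cancel_right, mul_assoc]

theorem integrable_prod_mul_norm_add_pow {E : Type*} [SeminormedAddCommGroup E]
    [MeasurableSpace E] [OpensMeasurableSpace E] [MeasurableAdd₂ E] {μ : Measure E} [SFinite μ]
    {u k : E → ℝ} (m : ℕ)
    (hu : AEStronglyMeasurable u μ) (hk : AEStronglyMeasurable k μ)
    (hum : Integrable (fun y => u y * (1 + ‖y‖) ^ m) μ)
    (hkm : Integrable (fun z => k z * (1 + ‖z‖) ^ m) μ) :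
    Integrable (fun q : E × E => u q.2 * k q.1 * ‖q.1 + q.2‖ ^ m) (μ.prod μ) := by
  refine (hkm.norm.mul_prod hum.norm).mono' ?_ (ae_of_all _ fun q => ?_)
  · exact (hu.comp_snd.mul hk.comp_fst).mul
      (by fun_prop : Measurable fun q : E × E => ‖q.1 + q.2‖ ^ m).aestronglyMeasurable
  · have hnorm : ‖q.1 + q.2‖ ≤ (1 + ‖q.1‖) * (1 + ‖q.2‖) := by
      nlinarith [norm_add_le q.1 q.2, norm_nonneg q.1, norm_nonneg q.2]
    simp only [norm_mul, norm_pow, Real.norm_eq_abs, abs_norm]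
    calc |u q.2| * |k q.1| * ‖q.1 + q.2‖ ^ m
        ≤ |u q.2| * |k q.1| * ((1 + ‖q.1‖) * (1 + ‖q.2‖)) ^ m := by gcongr
      _ = _ := by
        rw [abs_of_nonneg (by positivity : (0 : ℝ) ≤ 1 + ‖q.1‖),
          abs_of_nonneg (by positivity : (0 : ℝ) ≤ 1 + ‖q.2‖), mul_pow]
        ring

section Gaussian

variable {F : Type*} [NormedAddCommGroup F] [NormedSpace ℝ F] [FiniteDimensional ℝ F]
  [Nontrivial F] [MeasurableSpace F] [BorelSpace F] (μ : Measure F) [μ.IsAddHaarMeasure]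
  {b : ℝ}

theorem integrable_norm_pow_mul_exp_neg_mul_sq (hb : 0 < b) (m : ℕ) :
    Integrable (fun x : F => ‖x‖ ^ m * exp (-b * ‖x‖ ^ 2)) μ := by
  rw [integrable_fun_norm_addHaar μ (f := fun r => r ^ m * exp (-b * r ^ 2))]
  have := integrableOn_rpow_mul_exp_neg_mul_sq hb
    (s := ((finrank ℝ F - 1 + m : ℕ) : ℝ)) (neg_one_lt_zero.trans_le (Nat.cast_nonneg _))
  refine this.congr_fun (fun r _ => ?_) measurableSet_Ioi
  simp only [rpow_natCast, smul_eq_mul, pow_add, mul_assoc]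

theorem integrable_one_add_norm_pow_mul_exp_neg_mul_sq (hb : 0 < b) (m : ℕ) :
    Integrable (fun x : F => (1 + ‖x‖) ^ m * exp (-b * ‖x‖ ^ 2)) μ := by
  simp_rw [add_comm (1 : ℝ), add_pow, one_pow, mul_one, sum_mul]
  exact integrable_finsetSum _ fun i _ =>
    ((integrable_norm_pow_mul_exp_neg_mul_sq μ hb i).const_mul (m.choose i)).congr
      (ae_of_all _ fun x => by ring)

theorem integral_Ioi_pow_two_mul_add_one_mul_exp_neg_mul_sq (hb : 0 < b) (k : ℕ) :
    ∫ r in Ioi (0 : ℝ), r ^ (2 * k + 1) * exp (-b * r ^ 2) = k ! / (2 * b ^ (k + 1)) := by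
  have hGamma := integral_rpow_mul_exp_neg_mul_rpow two_pos
    (q := ((2 * k + 1 : ℕ) : ℝ)) (neg_one_lt_zero.trans_le (Nat.cast_nonneg _)) hb
  rw [show (-(((2 * k + 1 : ℕ) : ℝ) + 1) / 2) = -((k + 1 : ℕ) : ℝ) by push_cast; ring,
    show ((((2 * k + 1 : ℕ) : ℝ) + 1) / 2) = (k : ℝ) + 1 by push_cast; ring,
    Gamma_nat_eq_factorial, rpow_neg hb.le] at hGamma
  simp only [rpow_natCast, rpow_two] at hGamma
  rw [hGamma]
  field_simp

end Gaussian

section InnerProductSpace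

variable {E : Type*} [NormedAddCommGroup E] [InnerProductSpace ℝ E] [FiniteDimensional ℝ E]
  [MeasurableSpace E] [BorelSpace E] {p : ℝ}

theorem integral_norm_norm_sub_eq_of_norm_eq {v x : E} (h : ‖v‖ = ‖x‖) (Φ : ℝ → ℝ → ℝ) :
    ∫ y : E, Φ ‖y‖ ‖v - y‖ = ∫ y : E, Φ ‖y‖ ‖x - y‖ := by
  set T := Submodule.reflection (ℝ ∙ (v - x))ᗮ
  have hTv : T v = x := Submodule.reflection_sub h
  conv_rhs => rw [← integral_comp T]
  refine integral_congr_ae (ae_of_all _ fun y => ?_)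
  simp only [← hTv, ← map_sub, LinearIsometryEquiv.norm_map]

theorem integral_fun_norm_mul_norm_pow_two_mul (hE : finrank ℝ E = 2) (g : ℝ → ℝ) (n : ℕ) :
    ∫ x : E, g ‖x‖ * ‖x‖ ^ (2 * n) = 2 * π * ∫ r in Ioi (0 : ℝ), g r * r ^ (2 * n + 1) := by
  have : Nontrivial E := Module.nontrivial_of_finrank_eq_succ hE
  have hball : volume.real (ball (0 : E) 1) = π := by
    simp [Measure.real, InnerProductSpace.volume_ball, hE, pi_nonneg, one_add_one_eq_two]
  rw [integral_fun_norm_addHaar volume (fun r => g r * r ^ (2 * n)), hE, hball]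
  simp only [nsmul_eq_mul, smul_eq_mul, Nat.cast_ofNat, ← mul_assoc]
  congr 1
  refine setIntegral_congr_fun measurableSet_Ioi fun r _ => ?_
  ring

theorem integral_gaussian_mul_norm_pow_two_mul (hE : finrank ℝ E = 2) (hp : 0 < p) (i : ℕ) :
    ∫ x : E, p / π * exp (-p * ‖x‖ ^ 2) * ‖x‖ ^ (2 * i) = i ! / p ^ i := by
  have hconst : ∫ r in Ioi (0 : ℝ), p / π * exp (-p * r ^ 2) * r ^ (2 * i + 1) =
      p / π * ∫ r in Ioi (0 : ℝ), r ^ (2 * i + 1) * exp (-p * r ^ 2) := by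
    rw [← integral_const_mul]
    exact setIntegral_congr_fun measurableSet_Ioi fun r _ => by ring
  rw [integral_fun_norm_mul_norm_pow_two_mul hE (fun r => p / π * exp (-p * r ^ 2)), hconst,
    integral_Ioi_pow_two_mul_add_one_mul_exp_neg_mul_sq hp, pow_succ]
  field_simp

theorem integral_radial_mul_pow_mul_conj_pow_eq_zero (G : ℝ → ℂ) {i j : ℕ} (hij : i ≠ j) :
    ∫ w : ℂ, G ‖w‖ * (w ^ i * conj w ^ j) = 0 := by
  -- rotating by the angle `π / (i - j)` multiplies `w ^ i * conj w ^ j` by `-1`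
  set a : Circle := Circle.exp (π / ((i : ℝ) - j))
  have hdiff : ((i : ℝ) - j) ≠ 0 := sub_ne_zero.mpr (by exact_mod_cast hij)
  have ha : (a : ℂ) ^ i * conj (a : ℂ) ^ j = -1 := by
    rw [← Circle.coe_inv_eq_conj, ← Circle.coe_pow, ← Circle.coe_pow, ← Circle.coe_mul,
      ← Circle.exp_neg, ← Circle.exp_natCast_mul, ← Circle.exp_natCast_mul, ← Circle.exp_add,
      Circle.coe_exp]
    rw [show (i : ℝ) * (π / (i - j)) + j * -(π / (i - j)) = π by field_simp; ring]
    exact Complex.exp_pi_mul_I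
  have hrot : ∀ w : ℂ, G ‖rotation a w‖ * ((rotation a w) ^ i * conj (rotation a w) ^ j)
      = -(G ‖w‖ * (w ^ i * conj w ^ j)) := by
    intro w
    simp only [rotation_apply, norm_mul, Circle.norm_coe, one_mul, mul_pow, map_mul]
    linear_combination (G ‖w‖ * (w ^ i * conj w ^ j)) * ha
  have := integral_comp (rotation a) fun w : ℂ => G ‖w‖ * (w ^ i * conj w ^ j)
  simp_rw [hrot, integral_neg] at this
  exact CharZero.eq_neg_self_iff.mp this.symm

theorem ofReal_norm_add_pow_two_mul_eq_sum (w y : ℂ) (n : ℕ) :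
    ((‖w + y‖ ^ (2 * n) : ℝ) : ℂ) = ∑ i ∈ range (n + 1), ∑ j ∈ range (n + 1),
      (n.choose i * n.choose j * y ^ (n - i) * conj y ^ (n - j) : ℂ) * (w ^ i * conj w ^ j) := by
  rw [pow_mul, Complex.ofReal_pow, Complex.ofReal_pow, ← Complex.mul_conj', map_add, mul_pow,
    add_pow, add_pow, sum_mul_sum]
  exact sum_congr rfl fun i _ => sum_congr rfl fun j _ => by ring

theorem integral_gaussian_mul_norm_add_pow_complex (hp : 0 < p) (y : ℂ) (n : ℕ) :
    ∫ w : ℂ, p / π * exp (-p * ‖w‖ ^ 2) * ‖w + y‖ ^ (2 * n) =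
      ∑ i ∈ range (n + 1), (n.choose i : ℝ) ^ 2 * i ! * ‖y‖ ^ (2 * (n - i)) / p ^ i := by
  set g : ℝ → ℝ := fun r => p / π * exp (-p * r ^ 2)
  have hint : ∀ i j : ℕ, Integrable fun w : ℂ => (g ‖w‖ : ℂ) * (w ^ i * conj w ^ j) := by
    intro i j
    refine ((integrable_norm_pow_mul_exp_neg_mul_sq volume hp (i + j)).const_mul (p / π)).mono'
      (by fun_prop) (ae_of_all _ fun w => le_of_eq ?_)
    rw [norm_mul, Complex.norm_real, Real.norm_of_nonneg (by simp only [g]; positivity),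
      norm_mul, norm_pow, norm_pow, Complex.norm_conj]
    ring
  have hdiag : ∀ i : ℕ, ∫ w : ℂ, (g ‖w‖ : ℂ) * (w ^ i * conj w ^ i) = (i ! / p ^ i : ℝ) := by
    intro i
    simp_rw [← mul_pow, Complex.mul_conj', ← pow_mul, ← Complex.ofReal_pow, ← Complex.ofReal_mul]
    rw [integral_complex_ofReal,
      integral_gaussian_mul_norm_pow_two_mul Complex.finrank_real_complex hp]
  have hoff : ∀ i j : ℕ, i ≠ j → ∫ w : ℂ, (g ‖w‖ : ℂ) * (w ^ i * conj w ^ j) = 0 :=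
    fun i j => integral_radial_mul_pow_mul_conj_pow_eq_zero (fun r => (g r : ℂ))
  apply Complex.ofReal_injective
  rw [← integral_complex_ofReal]
  calc ∫ w : ℂ, ((g ‖w‖ * ‖w + y‖ ^ (2 * n) : ℝ) : ℂ)
      = ∫ w : ℂ, ∑ i ∈ range (n + 1), ∑ j ∈ range (n + 1),
          (n.choose i * n.choose j * y ^ (n - i) * conj y ^ (n - j) : ℂ) *
            ((g ‖w‖ : ℂ) * (w ^ i * conj w ^ j)) := by
        simp_rw [Complex.ofReal_mul, ofReal_norm_add_pow_two_mul_eq_sum, mul_sum]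
        exact integral_congr_ae (ae_of_all _ fun w =>
          sum_congr rfl fun i _ => sum_congr rfl fun j _ => by ring)
    _ = ∑ i ∈ range (n + 1), ∑ j ∈ range (n + 1),
          (n.choose i * n.choose j * y ^ (n - i) * conj y ^ (n - j) : ℂ) *
            ∫ w : ℂ, (g ‖w‖ : ℂ) * (w ^ i * conj w ^ j) := by
        rw [integral_finsetSum _ fun i _ =>
          integrable_finsetSum _ fun j _ => (hint i j).const_mul _]
        refine sum_congr rfl fun i _ => ?_
        rw [integral_finsetSum _ fun j _ => (hint i j).const_mul _]
        exact sum_congr rfl fun j _ => integral_const_mul _ _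
    _ = ∑ i ∈ range (n + 1),
          (n.choose i * n.choose i * y ^ (n - i) * conj y ^ (n - i) : ℂ) * (i ! / p ^ i : ℝ) := by
        refine sum_congr rfl fun i hi => ?_
        rw [sum_eq_single_of_mem i hi fun j _ hj => by rw [hoff i j hj.symm, mul_zero], hdiag]
    _ = _ := by
        push_cast
        refine sum_congr rfl fun i _ => ?_
        rw [pow_mul, ← Complex.mul_conj', mul_pow]
        ring

theorem sum_range_choose_sq_mul_factorial_eq (n : ℕ) (t : ℕ → ℝ) (b : ℝ) :
    ∑ i ∈ range (n + 1), (n.choose i : ℝ) ^ 2 * i ! * t (n - i) / b ^ i =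
      ∑ k ∈ range (n + 1), (n ! : ℝ) ^ 2 / ((n - k)! * (k ! : ℝ) ^ 2) * t k / b ^ (n - k) := by
  rw [← sum_range_reflect]
  refine sum_congr rfl fun k hk => ?_
  have hkn : k ≤ n := Nat.lt_succ_iff.mp (mem_range.mp hk)
  rw [show n + 1 - 1 - k = n - k by omega, Nat.sub_sub_self hkn, Nat.choose_symm hkn,
    Nat.cast_choose ℝ hkn]
  field_simp

theorem integral_gaussian_mul_norm_add_pow (hE : finrank ℝ E = 2) (hp : 0 < p) (y : E) (n : ℕ) :
    ∫ z : E, p / π * exp (-p * ‖z‖ ^ 2) * ‖z + y‖ ^ (2 * n) =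
      ∑ i ∈ range (n + 1), (n.choose i : ℝ) ^ 2 * i ! * ‖y‖ ^ (2 * (n - i)) / p ^ i := by
  let S : ℂ ≃ₗᵢ[ℝ] E :=
    Complex.orthonormalBasisOneI.equiv (stdOrthonormalBasis ℝ E) (finCongr hE.symm)
  obtain ⟨w, rfl⟩ := S.surjective y
  rw [← integral_comp S]
  simp_rw [← map_add, S.norm_map]
  exact integral_gaussian_mul_norm_add_pow_complex hp w n

theorem integral_gaussian_convolution_mul_norm_pow (hE : finrank ℝ E = 2) (hp : 0 < p)
    {u : E → ℝ} {C : ℝ} (hu : AEStronglyMeasurable u) (hC : ∀ y, ‖u y‖ ≤ C)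
    (hs : HasCompactSupport u) (n : ℕ) :
    ∫ x : E, (∫ y : E, u y * (p / π * exp (-p * ‖x - y‖ ^ 2))) * ‖x‖ ^ (2 * n) =
      ∑ k ∈ range (n + 1), (n ! : ℝ) ^ 2 / ((n - k)! * (k ! : ℝ) ^ 2) *
        (∫ y : E, u y * ‖y‖ ^ (2 * k)) / p ^ (n - k) := by
  have : Nontrivial E := Module.nontrivial_of_finrank_eq_succ hE
  have hmom : ∀ g : E → ℝ, Continuous g → Integrable fun y => u y * g y := fun _ hg =>
    hs.integrable_mul_continuous hu hC hg
  have hgauss : Integrable fun z : E => p / π * exp (-p * ‖z‖ ^ 2) * (1 + ‖z‖) ^ (2 * n) :=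
    ((integrable_one_add_norm_pow_mul_exp_neg_mul_sq volume hp (2 * n)).const_mul (p / π)).congr
      (ae_of_all _ fun z => by ring)
  have hprod := integrable_prod_mul_norm_add_pow (2 * n) hu (by fun_prop) (hmom _ (by fun_prop))
    hgauss
  rw [integral_integral_mul_sub_mul (k := fun z => p / π * exp (-p * ‖z‖ ^ 2))
    (w := fun x => ‖x‖ ^ (2 * n)) hprod]
  simp_rw [integral_gaussian_mul_norm_add_pow hE hp, mul_sum]
  rw [integral_finsetSum _ fun i _ => hmom _ (by fun_prop),
    ← sum_range_choose_sq_mul_factorial_eq n (fun k => ∫ y : E, u y * ‖y‖ ^ (2 * k)) p]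
  refine sum_congr rfl fun i _ => ?_
  rw [mul_div_right_comm, ← integral_const_mul]
  exact integral_congr_ae (ae_of_all _ fun y => by ring)

end InnerProductSpace

open MeasureTheory Set Real

theorem convolved_moments_general
    (f : ℝ → ℝ) (F R₀ p : ℝ) (hp : 0 < p)
    (hmeas : Measurable f)
    (hpos : ∀ r : ℝ, 0 ≤ r → 0 ≤ f r)
    (hbd : ∀ r : ℝ, 0 ≤ r → f r ≤ F)
    (hsupp : ∀ r : ℝ, R₀ < r → f r = 0)
    (c : ℕ → ℝ)
    (hc : ∀ n : ℕ, c n = 2 * π * ∫ r in Ioi (0:ℝ), f r * r ^ (2 * n + 1))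
    (fc : ℝ → ℝ)
    (hfc : ∀ r : ℝ, fc r = ∫ y : EuclideanSpace ℝ (Fin 2),
      f ‖y‖ * (p / π * Real.exp (-p * ‖EuclideanSpace.single (0 : Fin 2) r - y‖ ^ 2)))
    (c' : ℕ → ℝ)
    (hc' : ∀ n : ℕ, c' n = 2 * π * ∫ r in Ioi (0:ℝ), fc r * r ^ (2 * n + 1)) :
    (∀ n : ℕ, c' n = ∑ k ∈ Finset.range (n + 1),
      ((n.factorial : ℝ)) ^ 2 / (((n - k).factorial : ℝ) * ((k.factorial : ℝ)) ^ 2) *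
        c k / p ^ (n - k)) ∧
    c' 0 = c 0 ∧ c' 1 = c 0 / p + c 1 := by
  have hE : finrank ℝ (EuclideanSpace ℝ (Fin 2)) = 2 := finrank_euclideanSpace_fin
  have hc_eq (k : ℕ) : ∫ y : EuclideanSpace ℝ (Fin 2), f ‖y‖ * ‖y‖ ^ (2 * k) = c k := by
    rw [hc, integral_fun_norm_mul_norm_pow_two_mul hE]
  have hfc_eq (x : EuclideanSpace ℝ (Fin 2)) :
      fc ‖x‖ = ∫ y, f ‖y‖ * (p / π * exp (-p * ‖x - y‖ ^ 2)) := by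
    rw [hfc]
    exact integral_norm_norm_sub_eq_of_norm_eq (by simp) fun a b => f a * (p / π * exp (-p * b ^ 2))
  have hF : 0 ≤ F := (hpos 0 le_rfl).trans (hbd 0 le_rfl)
  have hbound (y : EuclideanSpace ℝ (Fin 2)) : ‖f ‖y‖‖ ≤ F :=
    abs_le.mpr ⟨by linarith [hpos _ (norm_nonneg y)], hbd _ (norm_nonneg y)⟩
  have hsupport : HasCompactSupport fun y : EuclideanSpace ℝ (Fin 2) => f ‖y‖ :=
    HasCompactSupport.intro (isCompact_closedBall 0 R₀) fun y hy => hsupp _ (by simpa using hy)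
  have hmoments (n : ℕ) : c' n = ∑ k ∈ Finset.range (n + 1),
      ((n.factorial : ℝ)) ^ 2 / (((n - k).factorial : ℝ) * ((k.factorial : ℝ)) ^ 2) *
        c k / p ^ (n - k) := by
    have hc'_eq : c' n = ∫ x : EuclideanSpace ℝ (Fin 2), fc ‖x‖ * ‖x‖ ^ (2 * n) := by
      rw [hc', integral_fun_norm_mul_norm_pow_two_mul hE]
    simp_rw [hc'_eq, hfc_eq, integral_gaussian_convolution_mul_norm_pow (u := fun y => f ‖y‖) hE hp
      (hmeas.comp measurable_norm).aestronglyMeasurable hbound hsupport, hc_eq]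
  refine ⟨hmoments, ?_, ?_⟩
  · simp [hmoments 0]
  · rw [hmoments 1]
    norm_num [sum_range_succ]

theorem convolved_moments
    (f : ℝ → ℝ) (F R₀ p : ℝ) (hp : 0 < p) (hR₀ : 0 < R₀)
    (hmeas : Measurable f)
    (hpos : ∀ r : ℝ, 0 ≤ r → 0 ≤ f r)
    (hbd : ∀ r : ℝ, 0 ≤ r → f r ≤ F)
    (hsupp : ∀ r : ℝ, R₀ < r → f r = 0)
    (c : ℕ → ℝ)
    (hc : ∀ n : ℕ, c n = 2 * π * ∫ r in Ioi (0:ℝ), f r * r ^ (2 * n + 1))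
    (fc : ℝ → ℝ)
    (hfc : ∀ r : ℝ, fc r = ∫ y : EuclideanSpace ℝ (Fin 2),
      f ‖y‖ * (p / π * Real.exp (-p * ‖EuclideanSpace.single (0 : Fin 2) r - y‖ ^ 2)))
    (c' : ℕ → ℝ)
    (hc' : ∀ n : ℕ, c' n = 2 * π * ∫ r in Ioi (0:ℝ), fc r * r ^ (2 * n + 1)) :
    (∀ n : ℕ, c' n = ∑ k ∈ Finset.range (n + 1),
      ((n.factorial : ℝ)) ^ 2 / (((n - k).factorial : ℝ) * ((k.factorial : ℝ)) ^ 2) *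
        c k / p ^ (n - k)) ∧
    c' 0 = c 0 ∧ c' 1 = c 0 / p + c 1 :=
  convolved_moments_general f F R₀ p hp hmeas hpos hbd hsupp c hc fc hfc c' hc'
end
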